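/- For 0 < q < 1, n ∈ ℕ, and nonzero c, d, x with dx ∉ q^(−ℕ): (c x q^(−n); q)_∞ (d x; q)_∞ ₁φ₁(q^(−n); c x q^(−n); q, cq/d) = (c/d)^n (d x q^(−n); q)_∞ (c x; q)_∞ ₁φ₁(q^(−n); d x q^(−n); q, dq/c). Equivalently, ψ_{q^{−n−1}} = (c/d)^n ψ^†_{q^{−n−1}} where ψ_γ(x) = (cqγx, dx;q)_∞ ₁φ₁(qγ; cqγx; q, cq/d) and ψ^†_γ is obtained by swapping c and d. -/

import Mathlib

/-!
Write `p = q⁻¹`. Since `(w q^{-n}; q)_∞ = (w q^{-n}; q)_n (w; q)_∞`, both sides carry the factor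
`(cx; q)_∞ (dx; q)_∞`, and inverting the base turns the terminating series into
`(w q^{-n}; q)_n ₁φ₁(q^{-n}; w q^{-n}; q, y q) = ∑ₘ [n m]_p yᵐ (wp; p)_{n-m}`.
With `y = c/d`, `v = dxp` (so `yv = cxp`), the theorem becomes
`∑ₘ [n m]_p yᵐ (yv; p)_{n-m} = ∑ₘ [n m]_p yᵐ (v; p)ₘ` after reflecting `m ↦ n - m` on the right,
and by the q-binomial theorem both sides expand into the same q-trinomial double sum.
-/

open scoped BigOperators

/-- q-Pochhammer infinite product `(a;q)_∞`. -/
noncomputable def qp (q a : ℂ) : ℂ := ∏' n : ℕ, (1 - a * q ^ n)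

/-- q-Pochhammer `(a;q)_k`. -/
noncomputable def qpn (q a : ℂ) (k : ℕ) : ℂ := ∏ j ∈ Finset.range k, (1 - a * q ^ j)

/-- theta function `θ(x;q) = (x;q)_∞ (q/x;q)_∞`. -/
noncomputable def theta (q x : ℂ) : ℂ := qp q x * qp q (q / x)

/-- the `₁φ₁(a;b;q,z)` series. -/
noncomputable def phi11 (q a b z : ℂ) : ℂ :=
  ∑' n : ℕ, qpn q a n / (qpn q q n * qpn q b n) * (-1) ^ n * q ^ (n * (n - 1) / 2) * z ^ n

/-- the terminating `₂φ₀(q^(-n),B;—;q,z)` series (Gasper–Rahman convention). -/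
noncomputable def phi20 (q : ℂ) (n : ℕ) (B z : ℂ) : ℂ :=
  ∑ k ∈ Finset.range (n + 1),
    qpn q ((q ^ n)⁻¹) k * qpn q B k / qpn q q k * (-1) ^ k * (q ^ (k * (k - 1) / 2))⁻¹ * z ^ k

open Finset

section QPochhammer

variable (q : ℂ)

theorem qpn_succ (a : ℂ) (k : ℕ) : qpn q a (k + 1) = qpn q a k * (1 - a * q ^ k) :=
  prod_range_succ _ k

theorem qpn_succ' (a : ℂ) (k : ℕ) : qpn q a (k + 1) = (1 - a) * qpn q (a * q) k := by
  simp only [qpn, prod_range_succ', pow_succ', pow_zero, mul_one, mul_assoc, mul_left_comm,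
    mul_comm]

theorem qpn_add (a : ℂ) (m r : ℕ) : qpn q a (m + r) = qpn q a m * qpn q (a * q ^ m) r := by
  simp only [qpn, prod_range_add, pow_add, mul_assoc]

theorem qpn_ne_zero_iff (a : ℂ) (n : ℕ) : qpn q a n ≠ 0 ↔ ∀ i < n, a * q ^ i ≠ 1 := by
  rw [qpn, prod_ne_zero_iff]
  simp only [mem_range, ne_eq, sub_eq_zero, eq_comm (a := (1 : ℂ))]

theorem qpn_self_ne_zero (hq : ∀ k : ℕ, q ^ (k + 1) ≠ 1) (k : ℕ) : qpn q q k ≠ 0 :=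
  (qpn_ne_zero_iff q q k).2 fun i _ => by rw [← pow_succ']; exact hq i

end QPochhammer

def qbinom (p : ℂ) : ℕ → ℕ → ℂ
  | _, 0 => 1
  | 0, _ + 1 => 0
  | n + 1, k + 1 => qbinom p n k + p ^ (k + 1) * qbinom p n (k + 1)

section GaussianBinomial

variable (p : ℂ)

@[simp] theorem qbinom_zero_right (n : ℕ) : qbinom p n 0 = 1 := by cases n <;> rfl

theorem qbinom_succ_succ (n k : ℕ) :
    qbinom p (n + 1) (k + 1) = qbinom p n k + p ^ (k + 1) * qbinom p n (k + 1) := rfl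

theorem qbinom_eq_zero_of_lt {n k : ℕ} (h : n < k) : qbinom p n k = 0 := by
  induction n generalizing k with
  | zero => obtain ⟨k, rfl⟩ := Nat.exists_eq_succ_of_ne_zero (by omega : k ≠ 0); rfl
  | succ n ih =>
    obtain ⟨k, rfl⟩ := Nat.exists_eq_succ_of_ne_zero (by omega : k ≠ 0)
    rw [qbinom_succ_succ, ih (by omega), ih (by omega), mul_zero, add_zero]

theorem qbinom_mul_qpn {n k : ℕ} (hk : k ≤ n) :
    qbinom p n k * (qpn p p k * qpn p p (n - k)) = qpn p p n := by
  induction n generalizing k with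
  | zero =>
    obtain rfl : k = 0 := by omega
    simp [qpn]
  | succ n ih =>
    rcases k with _ | k
    · simp [qpn]
    rw [qbinom_succ_succ, Nat.add_sub_add_right, qpn_succ p p k, qpn_succ p p n]
    rcases (Nat.lt_or_eq_of_le (Nat.le_of_succ_le_succ hk)) with hkn | rfl
    · obtain ⟨r, hr⟩ : ∃ r, n - k = r + 1 := ⟨n - k - 1, by omega⟩
      have h₁ := ih (k := k) (by omega)
      have h₂ := ih (k := k + 1) hkn
      rw [hr, qpn_succ p p r] at h₁
      rw [show n - (k + 1) = r by omega, qpn_succ p p k] at h₂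
      rw [hr, qpn_succ p p r]
      have hpow : p ^ (k + 1) * (p * p ^ r) = p * p ^ n := by
        rw [← pow_succ', ← pow_add, ← pow_succ']; congr 1; omega
      linear_combination (1 - p * p ^ k) * h₁ + p ^ (k + 1) * (1 - p * p ^ r) * h₂
        - qpn p p n * hpow
    · have h₁ := ih (k := k) le_rfl
      rw [qbinom_eq_zero_of_lt p (Nat.lt_succ_self k)]
      linear_combination (1 - p * p ^ k) * h₁

theorem qbinom_eq_div (hp : ∀ k : ℕ, p ^ (k + 1) ≠ 1) {n k : ℕ} (hk : k ≤ n) :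
    qbinom p n k = qpn p p n / (qpn p p k * qpn p p (n - k)) :=
  eq_div_of_mul_eq (mul_ne_zero (qpn_self_ne_zero p hp k) (qpn_self_ne_zero p hp _))
    (qbinom_mul_qpn p hk)

theorem qbinom_symm (hp : ∀ k : ℕ, p ^ (k + 1) ≠ 1) {n k : ℕ} (hk : k ≤ n) :
    qbinom p n (n - k) = qbinom p n k := by
  rw [qbinom_eq_div p hp hk, qbinom_eq_div p hp (Nat.sub_le n k), Nat.sub_sub_self hk, mul_comm]

theorem qbinom_mul_qbinom (hp : ∀ k : ℕ, p ^ (k + 1) ≠ 1) {n k s : ℕ} (hkn : k ≤ n) (hsk : s ≤ k) :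
    qbinom p n k * qbinom p k s = qbinom p n s * qbinom p (n - s) (k - s) := by
  have h := qpn_self_ne_zero p hp
  rw [qbinom_eq_div p hp hkn, qbinom_eq_div p hp hsk, qbinom_eq_div p hp (hsk.trans hkn),
    qbinom_eq_div p hp (Nat.sub_le_sub_right hkn s), Nat.sub_sub_sub_cancel_right hsk]
  field_simp [h]

theorem pow_choose_two_mul_neg_mul_pow (u : ℂ) (j : ℕ) :
    p ^ j.choose 2 * (-(u * p)) ^ j = p ^ (j + 1).choose 2 * (-u) ^ j := by
  rw [Nat.choose_succ_succ', Nat.choose_one_right, neg_mul_eq_neg_mul, mul_pow]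
  ring

theorem qpn_eq_sum_qbinom (u : ℂ) (r : ℕ) :
    qpn p u r = ∑ j ∈ range (r + 1), qbinom p r j * p ^ j.choose 2 * (-u) ^ j := by
  induction r generalizing u with
  | zero => simp [qpn]
  | succ r ih =>
    set S := ∑ j ∈ range (r + 1), qbinom p r j * p ^ (j + 1).choose 2 * (-u) ^ j with hS_def
    have hS : qpn p (u * p) r = S := by
      rw [ih]
      exact sum_congr rfl fun j _ => by rw [mul_assoc, pow_choose_two_mul_neg_mul_pow, ← mul_assoc]
    have hS_shift : S = 1 + ∑ j ∈ range (r + 1),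
        p ^ (j + 1) * qbinom p r (j + 1) * p ^ (j + 1).choose 2 * (-u) ^ (j + 1) := by
      rw [hS_def, sum_range_succ' _ r, sum_range_succ _ r,
        qbinom_eq_zero_of_lt p (Nat.lt_succ_self r)]
      simp only [Nat.choose_succ_succ' (_ + 1), Nat.choose_one_right, pow_add]
      simp [mul_comm, mul_left_comm, mul_assoc, add_comm]
    have hS_mul : -u * S =
        ∑ j ∈ range (r + 1), qbinom p r j * p ^ (j + 1).choose 2 * (-u) ^ (j + 1) := by
      rw [mul_sum]
      exact sum_congr rfl fun j _ => by ring
    rw [qpn_succ', hS, sum_range_succ', sub_eq_add_neg, add_mul, one_mul, hS_mul]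
    nth_rewrite 1 [hS_shift]
    simp only [qbinom_succ_succ, add_mul, sum_add_distrib, qbinom_zero_right, Nat.choose_zero_succ,
      pow_zero, mul_one]
    ring

theorem sum_qbinom_mul_pow_mul_qpn_sub_eq (hp : ∀ k : ℕ, p ^ (k + 1) ≠ 1) (y v : ℂ) (n : ℕ) :
    ∑ m ∈ range (n + 1), qbinom p n m * y ^ m * qpn p (y * v) (n - m) =
      ∑ m ∈ range (n + 1), qbinom p n m * y ^ m * qpn p v m := by
  let f : ℕ → ℕ → ℂ := fun m j =>
    qbinom p n m * qbinom p (n - m) j * p ^ j.choose 2 * (-v) ^ j * y ^ (m + j)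
  have hL : ∀ m ∈ range (n + 1),
      qbinom p n m * y ^ m * qpn p (y * v) (n - m) = ∑ j ∈ range (n + 1 - m), f m j := by
    intro m hm
    rw [qpn_eq_sum_qbinom, show n - m + 1 = n + 1 - m by grind, mul_sum]
    refine sum_congr rfl fun j _ => ?_
    simp only [f, neg_mul_eq_mul_neg, mul_pow, pow_add]
    ring
  have hR : ∀ i ∈ range (n + 1),
      qbinom p n i * y ^ i * qpn p v i = ∑ k ∈ range (i + 1), f k (i - k) := by
    intro i hi
    rw [qpn_eq_sum_qbinom, ← sum_range_reflect, mul_sum]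
    refine sum_congr rfl fun k hk => ?_
    have hki : k ≤ i := by grind
    simp only [f, add_tsub_cancel_right, Nat.add_sub_cancel' hki]
    rw [qbinom_symm p hp hki, ← qbinom_mul_qbinom p hp (by grind) hki]
    ring
  rw [sum_congr rfl hL, sum_congr rfl hR, sum_range_diag_flip]

theorem pow_mul_sum_qbinom_reflect (hp : ∀ k : ℕ, p ^ (k + 1) ≠ 1) {y z : ℂ}
    (hyz : y * z = 1) (X : ℕ → ℂ) (n : ℕ) :
    y ^ n * ∑ m ∈ range (n + 1), qbinom p n m * z ^ m * X (n - m) =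
      ∑ m ∈ range (n + 1), qbinom p n m * y ^ m * X m := by
  rw [← sum_range_reflect (fun m => qbinom p n m * y ^ m * X m), mul_sum]
  refine sum_congr rfl fun m hm => ?_
  have hmn : m ≤ n := by grind
  rw [add_tsub_cancel_right, qbinom_symm p hp hmn, ← Nat.sub_add_cancel hmn, pow_add,
    Nat.sub_add_cancel hmn]
  have hyzm : y ^ m * z ^ m = 1 := by rw [← mul_pow, hyz, one_pow]
  linear_combination qbinom p n m * y ^ (n - m) * X (n - m) * hyzm

section QSeries

variable {q : ℂ}

theorem inv_pow_succ_ne_one (hq : ∀ k : ℕ, q ^ (k + 1) ≠ 1) (k : ℕ) : q⁻¹ ^ (k + 1) ≠ 1 := by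
  rw [inv_pow]
  exact inv_ne_one.2 (hq k)

theorem multipliable_one_sub_mul_pow (hq : ‖q‖ < 1) (a : ℂ) :
    Multipliable fun i : ℕ => 1 - a * q ^ i := by
  have h : Summable fun i : ℕ => ‖-(a * q ^ i)‖ := by
    simpa only [norm_neg, norm_mul, norm_pow] using
      (summable_geometric_of_lt_one (norm_nonneg q) hq).mul_left ‖a‖
  simpa only [sub_eq_add_neg] using multipliable_one_add_of_summable h

theorem qp_eq_qpn_mul_qp (hq : ‖q‖ < 1) (a : ℂ) (n : ℕ) :
    qp q a = qpn q a n * qp q (a * q ^ n) := by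
  have hshift (i : ℕ) : a * q ^ (i + n) = a * q ^ n * q ^ i := by ring
  have h : Multipliable fun i : ℕ => 1 - a * q ^ (i + n) := by
    simpa only [hshift] using multipliable_one_sub_mul_pow hq (a * q ^ n)
  rw [qp, ← h.prod_mul_tprod_nat_mul' (f := fun i => 1 - a * q ^ i), qpn, qp]
  simp only [hshift]

theorem qpn_inv_base (hq : q ≠ 0) {a : ℂ} (ha : a ≠ 0) (m : ℕ) :
    qpn q a m = (-a) ^ m * q ^ m.choose 2 * qpn q⁻¹ a⁻¹ m := by
  induction m with
  | zero => simp [qpn]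
  | succ m ih =>
    rw [qpn_succ, qpn_succ, ih, Nat.choose_succ_succ', Nat.choose_one_right, inv_pow]
    field_simp
    ring

theorem qpn_inv_pow_mul_qpn (hq : q ≠ 0) (m r : ℕ) :
    qpn q (q⁻¹ ^ (m + r)) m * qpn q⁻¹ q⁻¹ r = qpn q⁻¹ q⁻¹ (m + r) := by
  induction m with
  | zero => simp [qpn]
  | succ m ih =>
    rw [qpn_succ', show q⁻¹ ^ (m + 1 + r) * q = q⁻¹ ^ (m + r) by
      rw [add_right_comm, pow_succ, mul_assoc, inv_mul_cancel₀ hq, mul_one],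
      mul_assoc, ih, add_right_comm, qpn_succ _ _ (m + r), pow_succ', mul_comm]

theorem qpn_mul_inv_pow_eq_qpn_inv (hq : q ≠ 0) (a : ℂ) (r : ℕ) :
    qpn q (a * q⁻¹ ^ r) r = qpn q⁻¹ (a * q⁻¹) r := by
  induction r generalizing a with
  | zero => simp [qpn]
  | succ r ih =>
    rw [qpn_succ', qpn_succ, pow_succ', ← mul_assoc,
      show a * q⁻¹ * q⁻¹ ^ r * q = a * q⁻¹ ^ r by field_simp, ← ih, mul_comm]

theorem phi11_inv_pow_eq_sum (hq : q ≠ 0) (n : ℕ) (b z : ℂ) :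
    phi11 q (q ^ n)⁻¹ b z = ∑ m ∈ range (n + 1),
      qpn q (q ^ n)⁻¹ m / (qpn q q m * qpn q b m) * (-1) ^ m * q ^ (m * (m - 1) / 2) * z ^ m := by
  refine tsum_eq_sum fun m hm => ?_
  have hzero : qpn q (q ^ n)⁻¹ m = 0 := by
    by_contra h
    exact (qpn_ne_zero_iff q _ m).1 h n (by grind) (inv_mul_cancel₀ (pow_ne_zero n hq))
  simp [hzero]

theorem qpn_inv_pow_eq_qbinom_mul (hq0 : q ≠ 0) (hq : ∀ k : ℕ, q ^ (k + 1) ≠ 1) {m n : ℕ}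
    (hmn : m ≤ n) : qpn q (q ^ n)⁻¹ m = qbinom q⁻¹ n m * qpn q⁻¹ q⁻¹ m := by
  have hp := inv_pow_succ_ne_one hq
  obtain ⟨r, rfl⟩ := Nat.exists_eq_add_of_le hmn
  refine mul_right_cancel₀ (qpn_self_ne_zero q⁻¹ hp r) ?_
  have h := qbinom_mul_qpn q⁻¹ (Nat.le_add_right m r)
  rw [add_tsub_cancel_left] at h
  rw [mul_assoc, h, ← inv_pow, qpn_inv_pow_mul_qpn hq0]

theorem qpn_mul_phi11_inv_pow (hq0 : q ≠ 0) (hq : ∀ k : ℕ, q ^ (k + 1) ≠ 1) (w y : ℂ) (n : ℕ)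
    (hw : qpn q (w * (q ^ n)⁻¹) n ≠ 0) :
    qpn q (w * (q ^ n)⁻¹) n * phi11 q (q ^ n)⁻¹ (w * (q ^ n)⁻¹) (y * q) =
      ∑ m ∈ range (n + 1), qbinom q⁻¹ n m * y ^ m * qpn q⁻¹ (w * q⁻¹) (n - m) := by
  have hp := inv_pow_succ_ne_one hq
  rw [phi11_inv_pow_eq_sum hq0, mul_sum]
  refine sum_congr rfl fun m hm => ?_
  obtain ⟨r, hr⟩ := Nat.exists_eq_add_of_le (by grind : m ≤ n)
  have hsplit : qpn q (w * (q ^ n)⁻¹) n = qpn q (w * (q ^ n)⁻¹) m * qpn q⁻¹ (w * q⁻¹) r := by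
    rw [hr, qpn_add, ← qpn_mul_inv_pow_eq_qpn_inv hq0]
    congr 2
    rw [pow_add, inv_pow]
    field_simp
  have hwm : qpn q (w * (q ^ n)⁻¹) m ≠ 0 := left_ne_zero_of_mul (hsplit ▸ hw)
  have hden : qpn q q m = (-1) ^ m * q ^ m * q ^ m.choose 2 * qpn q⁻¹ q⁻¹ m := by
    rw [qpn_inv_base hq0 hq0, neg_pow]
  rw [hsplit, qpn_inv_pow_eq_qbinom_mul hq0 hq (by grind : m ≤ n), hden, ← Nat.choose_two_right,
    show n - m = r by omega]
  have hB := qpn_self_ne_zero q⁻¹ hp m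
  -- opaque to `field_simp`, which would otherwise rewrite the arguments of these factors
  generalize qpn q (w * (q ^ n)⁻¹) m = A at hwm ⊢
  generalize qpn q⁻¹ q⁻¹ m = B at hB ⊢
  field_simp
  ring

theorem qpn_mul_inv_pow_ne_zero (hq : q ≠ 0) {w : ℂ} (hw : ∀ k : ℤ, w ≠ q ^ k) (n : ℕ) :
    qpn q (w * (q ^ n)⁻¹) n ≠ 0 := by
  refine (qpn_ne_zero_iff q _ n).2 fun i _ h => hw (n - i) ?_
  rw [zpow_sub₀ hq, zpow_natCast, zpow_natCast, eq_div_iff (pow_ne_zero _ hq)]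
  field_simp at h
  exact h

end QSeries

theorem psi_degenerate_general (q : ℝ) (hq0 : 0 < q) (hq1 : q < 1) (n : ℕ) (c d x : ℂ)
    (hc : c ≠ 0) (hd : d ≠ 0)
    (hcx : ∀ k : ℤ, c * x ≠ (q : ℂ) ^ k) (hdx : ∀ k : ℤ, d * x ≠ (q : ℂ) ^ k) :
    qp (q : ℂ) (c * x * (((q : ℂ) ^ n)⁻¹)) * qp (q : ℂ) (d * x) *
        phi11 (q : ℂ) (((q : ℂ) ^ n)⁻¹) (c * x * (((q : ℂ) ^ n)⁻¹)) (c * (q : ℂ) / d) =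
      (c / d) ^ n * (qp (q : ℂ) (d * x * (((q : ℂ) ^ n)⁻¹)) * qp (q : ℂ) (c * x) *
        phi11 (q : ℂ) (((q : ℂ) ^ n)⁻¹) (d * x * (((q : ℂ) ^ n)⁻¹)) (d * (q : ℂ) / c)) := by
  have hq0' : (q : ℂ) ≠ 0 := Complex.ofReal_ne_zero.2 hq0.ne'
  have hqnorm : ‖(q : ℂ)‖ < 1 := by rwa [Complex.norm_real, Real.norm_of_nonneg hq0.le]
  have hq (k : ℕ) : (q : ℂ) ^ (k + 1) ≠ 1 := by
    exact_mod_cast (pow_lt_one₀ hq0.le hq1 k.succ_ne_zero).ne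
  have hp := inv_pow_succ_ne_one hq
  have hsplit (w : ℂ) :
      qp q (w * ((q : ℂ) ^ n)⁻¹) = qpn q (w * ((q : ℂ) ^ n)⁻¹) n * qp q w := by
    rw [qp_eq_qpn_mul_qp hqnorm _ n, inv_mul_cancel_right₀ (pow_ne_zero n hq0')]
  have hL := qpn_mul_phi11_inv_pow hq0' hq (c * x) (c / d) n (qpn_mul_inv_pow_ne_zero hq0' hcx n)
  have hR := qpn_mul_phi11_inv_pow hq0' hq (d * x) (d / c) n (qpn_mul_inv_pow_ne_zero hq0' hdx n)
  have hcore := sum_qbinom_mul_pow_mul_qpn_sub_eq (q : ℂ)⁻¹ hp (c / d) (d * x * (q : ℂ)⁻¹) n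
  rw [show c / d * (d * x * (q : ℂ)⁻¹) = c * x * (q : ℂ)⁻¹ by field_simp] at hcore
  have hrefl := pow_mul_sum_qbinom_reflect (q : ℂ)⁻¹ hp (y := c / d) (z := d / c)
    (by field_simp) (fun m => qpn (q : ℂ)⁻¹ (d * x * (q : ℂ)⁻¹) m) n
  rw [show c * (q : ℂ) / d = c / d * q by ring, show d * (q : ℂ) / c = d / c * q by ring,
    hsplit, hsplit]
  linear_combination qp q (c * x) * qp q (d * x) * (hL - (c / d) ^ n * hR + hcore - hrefl)

/-- `ψ_{q^{-n-1}} = (c/d)^n ψ^†_{q^{-n-1}}` for the eigenfunctions `ψ_γ`. -/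
theorem psi_degenerate (q : ℝ) (hq0 : 0 < q) (hq1 : q < 1) (n : ℕ) (c d x : ℂ)
    (hc : c ≠ 0) (hd : d ≠ 0) (hx : x ≠ 0)
    (hcx : ∀ k : ℤ, c * x ≠ (q : ℂ) ^ k) (hdx : ∀ k : ℤ, d * x ≠ (q : ℂ) ^ k) :
    qp (q : ℂ) (c * x * (((q : ℂ) ^ n)⁻¹)) * qp (q : ℂ) (d * x) *
        phi11 (q : ℂ) (((q : ℂ) ^ n)⁻¹) (c * x * (((q : ℂ) ^ n)⁻¹)) (c * (q : ℂ) / d) =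
      (c / d) ^ n * (qp (q : ℂ) (d * x * (((q : ℂ) ^ n)⁻¹)) * qp (q : ℂ) (c * x) *
        phi11 (q : ℂ) (((q : ℂ) ^ n)⁻¹) (d * x * (((q : ℂ) ^ n)⁻¹)) (d * (q : ℂ) / c)) :=
  psi_degenerate_general q hq0 hq1 n c d x hc hd hcx hdx
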